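/- Let J ∈ 𝒥_{k,N} with N = kn − ℓ, 0 ≤ ℓ < k, and let μ = φ(J) be its spectral measure. Then for every integer d ≥ n: (i) there exists a monic matrix polynomial Π of degree d with ⟨Π, Π⟩_μ = 0; (ii) dim 𝒩_d(μ) = k(d+1) − N; and (iii) every monic matrix polynomial Π_d of degree d satisfying ⟨Π_d, P⟩_μ = 0 for all matrix polynomials P of degree less than d satisfies ⟨Π_d, Π_d⟩_μ = 0. -/

import Mathlib

/-!
For `ℂ^k`-valued polynomials put `T p = (v_jᴴ p(λ_j))_j ∈ ℂ^N` (`spectralEval`), so that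
`⟨p, p⟩_μ = ‖T p‖²` and the Gram matrix of a matrix polynomial is the Gram matrix of the images
under `T` of its columns. Everything rests on `T` being onto already on polynomials of degree
`< n`. Given that, `𝒩_d` is the kernel of `T` on degree `≤ d`, of dimension `k(d+1) - N` by
rank–nullity; subtracting from `X^d I` a matrix polynomial of degree `< n` whose columns have the
same images gives a monic `Π` all of whose columns lie in `ker T`, so `Π` is orthogonal to every
matrix polynomial; and a monic `Π_d` orthogonal to lower degrees satisfies
`⟨Π_d, Π_d⟩ = ⟨Π_d - Π, Π_d⟩ + ⟨Π, Π_d⟩ = 0`.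

Dually, surjectivity says that `w = 0` whenever `E₀ᴴ J^s w = 0` for all `s < n`. By induction on
`c`, `J^s w` vanishes on the blocks `≤ c` whenever `s + c < n`: in the inductive step both `J^s w`
and `J^(s+1) w` vanish on the blocks `≤ c`, and on block `c` the vector `J (J^s w)` only sees
`B_cᴴ` applied to block `c + 1` of `J^s w`; since `B_c` is in row echelon form with positive
pivots, `B_cᴴ` is injective.
-/

open Matrix Polynomial

noncomputable section

/-- `Esel k N b` is the block selection matrix `E_{b+1} ∈ ℂ^{N×k}` whose rows
`b*k, …, b*k + (k-1)` form the identity `I_k` (zero-based indexing). -/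
def Esel (k N : ℕ) (b : ℕ) : Matrix (Fin N) (Fin k) ℂ :=
  Matrix.of fun i a => if (i : ℕ) = b * k + (a : ℕ) then 1 else 0

/-- The last (possibly smaller) block selection matrix `E_n ∈ ℂ^{N×(k-ℓ)}`. -/
def EselLast (k n ℓ : ℕ) : Matrix (Fin (n * k - ℓ)) (Fin (k - ℓ)) ℂ :=
  Matrix.of fun i a => if (i : ℕ) = (n - 1) * k + (a : ℕ) then 1 else 0

/-- A square matrix is upper triangular with (real) positive diagonal entries. -/
def UpperTriPosDiag {k : ℕ} (M : Matrix (Fin k) (Fin k) ℂ) : Prop :=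
  ∀ r c : Fin k, ((c : ℕ) < (r : ℕ) → M r c = 0) ∧ (r = c → 0 < (M r c).re ∧ (M r c).im = 0)

/-- A (rectangular) matrix is in row echelon form with positive pivots. -/
def RowEchelonPosPivots {r m : ℕ} (R : Matrix (Fin r) (Fin m) ℂ) : Prop :=
  ∃ p : Fin r → Fin m, StrictMono p ∧
    ∀ i : Fin r, (0 < (R i (p i)).re ∧ (R i (p i)).im = 0) ∧
      ∀ j : Fin m, (j : ℕ) < (p i : ℕ) → R i j = 0

/-- The class `𝒥_{k,N}` (`N = n*k - ℓ`): Hermitian block tridiagonal matrices with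
`k×k` blocks (the last diagonal block of size `(k-ℓ)×(k-ℓ)`), subdiagonal blocks
`B_0,…,B_{n-3}` upper triangular with positive diagonal and `B_{n-2}` in row echelon
form with positive pivots. -/
def IsJkN (k n ℓ : ℕ) (J : Matrix (Fin (n * k - ℓ)) (Fin (n * k - ℓ)) ℂ) : Prop :=
  J.IsHermitian ∧
  (∀ i j : Fin (n * k - ℓ),
      ((i : ℕ) / k + 2 ≤ (j : ℕ) / k ∨ (j : ℕ) / k + 2 ≤ (i : ℕ) / k) → J i j = 0) ∧
  (∀ b : ℕ, b + 3 ≤ n →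
      UpperTriPosDiag ((Esel k (n * k - ℓ) (b + 1))ᴴ * J * Esel k (n * k - ℓ) b)) ∧
  RowEchelonPosPivots ((EselLast k n ℓ)ᴴ * J * Esel k (n * k - ℓ) (n - 2))


/-- The set `𝒩_d` of `ℂ^k`-valued polynomials `p` of degree at most `d` with
`Σ_j |v_j^* p(λ_j)|² = 0`. -/
def NcalSet (k N : ℕ) (d : ℕ) (lam : Fin N → ℝ) (v : Fin N → Fin k → ℂ) :
    Set (Fin k → Polynomial ℂ) :=
  {p | (∀ a, (p a).degree ≤ (d : ℕ)) ∧
      ∑ j, Complex.normSq (∑ a, star (v j a) * (p a).eval ((lam j : ℂ))) = 0}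

/-- The quasi-inner product `⟨P,Q⟩_μ = Σ_j P(λ_j)^* v_j v_j^* Q(λ_j)` of matrix
polynomials with respect to the spectral measure. -/
def innerPoly {k N : ℕ} (lam : Fin N → ℝ) (v : Fin N → Fin k → ℂ)
    (P Q : Polynomial (Matrix (Fin k) (Fin k) ℂ)) : Matrix (Fin k) (Fin k) ℂ :=
  ∑ j, (P.eval ((lam j : ℂ) • (1 : Matrix (Fin k) (Fin k) ℂ)))ᴴ *
      vecMulVec (v j) (star (v j)) *
      Q.eval ((lam j : ℂ) • (1 : Matrix (Fin k) (Fin k) ℂ))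

lemma UpperTriPosDiag.rowEchelonPosPivots {r : ℕ} {M : Matrix (Fin r) (Fin r) ℂ}
    (h : UpperTriPosDiag M) : RowEchelonPosPivots M :=
  ⟨id, strictMono_id, fun i => ⟨(h i i).2 rfl, fun j hj => (h i j).1 hj⟩⟩

lemma RowEchelonPosPivots.eq_zero_of_conjTranspose_mulVec_eq_zero {r m : ℕ}
    {R : Matrix (Fin r) (Fin m) ℂ} (hR : RowEchelonPosPivots R) {x : Fin r → ℂ}
    (hx : Rᴴ *ᵥ x = 0) : x = 0 := by
  obtain ⟨p, hp, hpiv⟩ := hR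
  funext i
  induction i using WellFoundedLT.induction with
  | _ i ih =>
    have hpivot : Rᴴ (p i) i ≠ 0 := by
      have := (hpiv i).1.1
      rw [conjTranspose_apply, star_ne_zero]
      rintro h
      simp [h] at this
    have hi := congrFun hx (p i)
    rw [mulVec, dotProduct, Finset.sum_eq_single i] at hi
    · exact (mul_eq_zero.mp hi).resolve_left hpivot
    · intro b _ hbi
      rcases lt_or_gt_of_ne hbi with hlt | hgt
      · rw [ih b hlt, Pi.zero_apply, mul_zero]
      · rw [conjTranspose_apply, (hpiv b).2 _ (hp hgt), star_zero, zero_mul]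
    · simp

def blockSel (N m o : ℕ) : Matrix (Fin N) (Fin m) ℂ :=
  of fun i a => if (i : ℕ) = o + a then 1 else 0

lemma Esel_eq_blockSel (k N b : ℕ) : Esel k N b = blockSel N k (b * k) := rfl

lemma blockSel_conjTranspose_mul_mul_apply {N m₁ m₂ o₁ o₂ : ℕ} (J : Matrix (Fin N) (Fin N) ℂ)
    {a : Fin m₁} {b : Fin m₂} {i₁ i₂ : Fin N} (h₁ : (i₁ : ℕ) = o₁ + a) (h₂ : (i₂ : ℕ) = o₂ + b) :
    ((blockSel N m₁ o₁)ᴴ * J * blockSel N m₂ o₂) a b = J i₁ i₂ := by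
  have hN (i : Fin N) {c : ℕ} (hc : (i : ℕ) = c) (j : Fin N) : (j : ℕ) = c ↔ j = i := by
    simp [Fin.ext_iff, hc]
  simp [blockSel, mul_apply, hN _ h₁, hN _ h₂]

lemma blockSel_conjTranspose_mulVec_apply {N m o : ℕ} (u : Fin N → ℂ) {a : Fin m} {i : Fin N}
    (h : (i : ℕ) = o + a) : ((blockSel N m o)ᴴ *ᵥ u) a = u i := by
  have hN (j : Fin N) : (j : ℕ) = o + a ↔ j = i := by simp [Fin.ext_iff, h]
  simp [blockSel, mulVec, dotProduct, hN]

lemma Nat.mul_add_div_eq_of_lt {c k b : ℕ} (hb : b < k) : (c * k + b) / k = c :=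
  Nat.div_eq_of_lt_le (by simp) (by rw [add_one_mul]; omega)

section BlockTridiagonal

variable {k N : ℕ} {J : Matrix (Fin N) (Fin N) ℂ}

lemma mulVec_apply_eq_sum_nextBlock
    (htri : ∀ i j : Fin N, ((i : ℕ) / k + 2 ≤ (j : ℕ) / k ∨ (j : ℕ) / k + 2 ≤ (i : ℕ) / k) →
      J i j = 0)
    {c m : ℕ} (hm : (c + 1) * k + m ≤ N)
    (hblock : ∀ j : Fin N, (j : ℕ) / k = c + 1 → (j : ℕ) % k < m)
    {u : Fin N → ℂ} (hu : ∀ j : Fin N, (j : ℕ) / k ≤ c → u j = 0)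
    (q : Fin N) (hq : (q : ℕ) / k = c) :
    (J *ᵥ u) q = ∑ a : Fin m,
      J q ⟨(c + 1) * k + a, by omega⟩ * u ⟨(c + 1) * k + a, by omega⟩ := by
  rw [mulVec, dotProduct]
  refine (Fintype.sum_of_injective (fun a : Fin m => (⟨(c + 1) * k + a, by omega⟩ : Fin N))
    (fun a b h => by simpa [Fin.ext_iff] using h) _ _ (fun j hj => ?_) (fun _ => rfl)).symm
  rcases lt_trichotomy ((j : ℕ) / k) (c + 1) with hlt | heq | hgt
  · rw [hu j (by omega), mul_zero]
  · refine absurd ⟨⟨j % k, hblock j heq⟩, Fin.ext ?_⟩ hj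
    simp only
    rw [← heq, Nat.div_add_mod']
  · rw [htri q j (Or.inl (by omega)), zero_mul]

lemma forall_div_le_succ_eq_zero_of_rowEchelonPosPivots (hJ : J.IsHermitian)
    (htri : ∀ i j : Fin N, ((i : ℕ) / k + 2 ≤ (j : ℕ) / k ∨ (j : ℕ) / k + 2 ≤ (i : ℕ) / k) →
      J i j = 0)
    {c m : ℕ} (hm : (c + 1) * k + m ≤ N)
    (hblock : ∀ j : Fin N, (j : ℕ) / k = c + 1 → (j : ℕ) % k < m)
    (hR : RowEchelonPosPivots ((blockSel N m ((c + 1) * k))ᴴ * J * blockSel N k (c * k)))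
    {u : Fin N → ℂ} (hu : ∀ j : Fin N, (j : ℕ) / k ≤ c → u j = 0)
    (hJu : ∀ q : Fin N, (q : ℕ) / k = c → (J *ᵥ u) q = 0) :
    ∀ j : Fin N, (j : ℕ) / k ≤ c + 1 → u j = 0 := by
  have hx : (fun a : Fin m => u ⟨(c + 1) * k + a, by omega⟩) = 0 := by
    refine hR.eq_zero_of_conjTranspose_mulVec_eq_zero (funext fun b => ?_)
    have hq : c * k + b < N := by rw [add_one_mul] at hm; omega
    rw [Pi.zero_apply, ← hJu ⟨c * k + b, hq⟩ (Nat.mul_add_div_eq_of_lt b.isLt),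
      mulVec_apply_eq_sum_nextBlock htri hm hblock hu _ (Nat.mul_add_div_eq_of_lt b.isLt)]
    simp only [mulVec, dotProduct]
    refine Finset.sum_congr rfl fun a _ => ?_
    rw [conjTranspose_apply, blockSel_conjTranspose_mul_mul_apply J
      (i₁ := ⟨_, (by omega : (c + 1) * k + a < N)⟩) (i₂ := ⟨_, hq⟩) rfl rfl, hJ.apply]
  intro j hj
  rcases hj.lt_or_eq with hlt | heq
  · exact hu j (by omega)
  · have hj' : (j : ℕ) = (c + 1) * k + j % k := by rw [← heq, Nat.div_add_mod']
    rw [show j = ⟨(c + 1) * k + j % k, by omega⟩ from Fin.ext hj']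
    exact congrFun hx ⟨j % k, hblock j heq⟩

end BlockTridiagonal

lemma IsJkN.forall_div_le_succ_eq_zero {k n ℓ : ℕ} (hℓ : ℓ < k)
    {J : Matrix (Fin (n * k - ℓ)) (Fin (n * k - ℓ)) ℂ} (hJ : IsJkN k n ℓ J) {c : ℕ}
    (hc : c + 2 ≤ n) {u : Fin (n * k - ℓ) → ℂ}
    (hu : ∀ j : Fin (n * k - ℓ), (j : ℕ) / k ≤ c → u j = 0)
    (hJu : ∀ q : Fin (n * k - ℓ), (q : ℕ) / k = c → (J *ᵥ u) q = 0) :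
    ∀ j : Fin (n * k - ℓ), (j : ℕ) / k ≤ c + 1 → u j = 0 := by
  obtain ⟨hherm, htri, hsub, hlast⟩ := hJ
  rcases (by omega : c + 3 ≤ n ∨ c + 2 = n) with hint | rfl
  · have h₁ : (c + 1) * k + k ≤ (n - 1) * k :=
      calc (c + 1) * k + k = (c + 2) * k := by ring
        _ ≤ (n - 1) * k := Nat.mul_le_mul_right k (by omega)
    have h₂ : (n - 1) * k + k = n * k := by rw [← add_one_mul, Nat.sub_add_cancel (by omega)]
    exact forall_div_le_succ_eq_zero_of_rowEchelonPosPivots hherm htri (m := k) (by omega)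
      (fun j _ => Nat.mod_lt _ (by omega)) (hsub c hint).rowEchelonPosPivots hu hJu
  · refine forall_div_le_succ_eq_zero_of_rowEchelonPosPivots hherm htri (m := k - ℓ)
      (by rw [show (c + 2) * k = (c + 1) * k + k by ring]; omega) (fun j hj => ?_) hlast hu hJu
    have h₁ := Nat.div_add_mod' j k
    rw [hj] at h₁
    have h₂ := j.isLt
    have h₃ : (c + 2) * k = (c + 1) * k + k := by ring
    omega

theorem IsJkN.eq_zero_of_forall_pow_mulVec_firstBlock_eq_zero {k n ℓ : ℕ} (hℓ : ℓ < k)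
    {J : Matrix (Fin (n * k - ℓ)) (Fin (n * k - ℓ)) ℂ} (hJ : IsJkN k n ℓ J)
    {w : Fin (n * k - ℓ) → ℂ} (hw : ∀ s < n, (Esel k (n * k - ℓ) 0)ᴴ *ᵥ (J ^ s *ᵥ w) = 0) :
    w = 0 := by
  have hk : 0 < k := by omega
  have hkrylov : ∀ c s, s + c < n → ∀ j : Fin (n * k - ℓ), (j : ℕ) / k ≤ c →
      (J ^ s *ᵥ w) j = 0 := by
    intro c
    induction c with
    | zero =>
      intro s hs j hj
      have hjk : (j : ℕ) < k := by rwa [Nat.le_zero, Nat.div_eq_zero_iff_lt hk] at hj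
      have h := congrFun (hw s (by omega)) ⟨j, hjk⟩
      rwa [Esel_eq_blockSel, blockSel_conjTranspose_mulVec_apply _ (i := j) (by simp)] at h
    | succ c ih =>
      intro s hs
      refine hJ.forall_div_le_succ_eq_zero hℓ (by omega) (ih s (by omega)) fun q hq => ?_
      rw [mulVec_mulVec, ← pow_succ']
      exact ih (s + 1) (by omega) q hq.le
  funext j
  have hj : (j : ℕ) / k < n := Nat.div_lt_of_lt_mul (by have := j.isLt; have := mul_comm n k; omega)
  have hn : 0 < n := (Nat.zero_le _).trans_lt hj
  simpa using hkrylov (n - 1) 0 (by omega) j (by omega)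

lemma LinearMap.surjective_of_forall_star_dotProduct_eq_zero {K M ι : Type*} [Field K]
    [StarRing K] [AddCommGroup M] [Module K M] [Fintype ι] [DecidableEq ι]
    (f : M →ₗ[K] ι → K) (h : ∀ x : ι → K, (∀ y, star x ⬝ᵥ f y = 0) → x = 0) :
    Function.Surjective f := by
  rw [← LinearMap.range_eq_top]
  by_contra hne
  obtain ⟨φ, hφ, hφf⟩ := Submodule.exists_dual_map_eq_bot_of_lt_top (lt_top_iff_ne_top.2 hne)
    inferInstance
  set x : ι → K := fun i => star (φ fun j => if i = j then 1 else 0)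
  have hφx (z : ι → K) : φ z = star x ⬝ᵥ z := by
    rw [LinearMap.pi_apply_eq_sum_univ φ z]
    simp [x, dotProduct, mul_comm]
  have hx : x = 0 := h x fun y => by
    rw [← hφx, ← Submodule.mem_bot K, ← hφf]
    exact Submodule.mem_map_of_mem (LinearMap.mem_range_self f y)
  exact hφ (LinearMap.ext fun z => by simp [hφx, hx])

lemma Matrix.pow_mulVec_eq_smul {ι R : Type*} [Fintype ι] [DecidableEq ι] [CommRing R]
    {A : Matrix ι ι R} {x : ι → R} {c : R} (h : A *ᵥ x = c • x) (s : ℕ) :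
    A ^ s *ᵥ x = c ^ s • x := by
  induction s with
  | zero => simp
  | succ s ih => rw [pow_succ', ← mulVec_mulVec, ih, mulVec_smul, h, smul_smul, pow_succ]

lemma eq_zero_of_sum_smul_eq_zero_of_orthonormal {ι : Type*} [Fintype ι] [DecidableEq ι]
    {u : ι → ι → ℂ} (horth : ∀ i j, ∑ a, star (u i a) * u j a = if i = j then 1 else 0)
    {x : ι → ℂ} (hx : ∑ j, x j • u j = 0) : x = 0 := by
  set U : Matrix ι ι ℂ := of fun a j => u j a
  have hU : Uᴴ * U = 1 := by
    ext i j
    simpa [U, mul_apply, one_apply] using horth i j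
  have hUx : U *ᵥ x = 0 := by
    simpa [U, mulVec, dotProduct, funext_iff, Finset.sum_apply, mul_comm] using hx
  rw [← one_mulVec x, ← hU, ← mulVec_mulVec, hUx, mulVec_zero]

def spectralEval {k N : ℕ} (lam : Fin N → ℝ) (v : Fin N → Fin k → ℂ) :
    (Fin k → ℂ[X]) →ₗ[ℂ] (Fin N → ℂ) where
  toFun p j := ∑ a, star (v j a) * (p a).eval (lam j : ℂ)
  map_add' p q := by funext j; simp [mul_add, Finset.sum_add_distrib]
  map_smul' c p := by funext j; simp [Finset.mul_sum, mul_left_comm]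

section SpectralEval

variable {k N : ℕ} {lam : Fin N → ℝ} {v : Fin N → Fin k → ℂ}

lemma spectralEval_apply (p : Fin k → ℂ[X]) (j : Fin N) :
    spectralEval lam v p j = ∑ a, star (v j a) * (p a).eval (lam j : ℂ) := rfl

lemma spectralEval_single (b : Fin k) (q : ℂ[X]) (j : Fin N) :
    spectralEval lam v (Pi.single b q) j = star (v j b) * q.eval (lam j : ℂ) := by
  simp [spectralEval_apply, Pi.single_apply, apply_ite]

end SpectralEval

theorem IsJkN.spectralEval_comp_piMap_degreeLT_surjective {k n ℓ : ℕ} (hℓ : ℓ < k)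
    {J : Matrix (Fin (n * k - ℓ)) (Fin (n * k - ℓ)) ℂ} (hJ : IsJkN k n ℓ J)
    {lam : Fin (n * k - ℓ) → ℝ} {vhat : Fin (n * k - ℓ) → Fin (n * k - ℓ) → ℂ}
    (heig : ∀ j, J *ᵥ vhat j = (lam j : ℂ) • vhat j)
    (horth : ∀ i j, ∑ a, star (vhat i a) * vhat j a = if i = j then 1 else 0)
    {v : Fin (n * k - ℓ) → Fin k → ℂ} (hv : ∀ j, v j = (Esel k (n * k - ℓ) 0)ᴴ *ᵥ vhat j)
    {m : ℕ} (hm : n ≤ m) :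
    Function.Surjective
      (spectralEval lam v ∘ₗ LinearMap.piMap fun _ : Fin k => (degreeLT ℂ m).subtype) := by
  refine LinearMap.surjective_of_forall_star_dotProduct_eq_zero _ fun x hx => ?_
  have hmoment : ∀ s < n, ∀ b : Fin k,
      ∑ j, star (x j) * (star (v j b) * (lam j : ℂ) ^ s) = 0 := by
    intro s hs b
    have hXs : (X ^ s : ℂ[X]) ∈ degreeLT ℂ m :=
      mem_degreeLT.2 (by rw [degree_X_pow]; exact_mod_cast (by omega : s < m))
    have hsingle : (LinearMap.piMap fun _ : Fin k => (degreeLT ℂ m).subtype)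
        (Pi.single b ⟨X ^ s, hXs⟩) = Pi.single b (X ^ s) := by
      funext a
      rcases eq_or_ne a b with rfl | hab <;> simp [*]
    have h := hx (Pi.single b ⟨X ^ s, hXs⟩)
    rw [LinearMap.comp_apply, hsingle] at h
    simpa [dotProduct, spectralEval_single] using h
  refine eq_zero_of_sum_smul_eq_zero_of_orthonormal horth
    (hJ.eq_zero_of_forall_pow_mulVec_firstBlock_eq_zero hℓ fun s hs => funext fun b => ?_)
  have := congrArg star (hmoment s hs b)
  simpa [mulVec_sum, mulVec_smul, pow_mulVec_eq_smul (heig _), ← hv, mul_comm] using this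

lemma Polynomial.eval_smul_one_apply {n R : Type*} [Fintype n] [DecidableEq n] [CommSemiring R]
    (P : (Matrix n n R)[X]) (r : R) (i j : n) :
    P.eval (r • 1) i j = (matPolyEquiv.symm P i j).eval r := by
  rw [← matPolyEquiv_eval, AlgEquiv.apply_symm_apply, scalar_apply, smul_one_eq_diagonal]

section InnerPoly

variable {k N : ℕ} {lam : Fin N → ℝ} {v : Fin N → Fin k → ℂ}

lemma innerPoly_apply (P Q : (Matrix (Fin k) (Fin k) ℂ)[X]) (a a' : Fin k) :
    innerPoly lam v P Q a a' = ∑ j, star (spectralEval lam v ((matPolyEquiv.symm P)ᵀ a) j) *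
      spectralEval lam v ((matPolyEquiv.symm Q)ᵀ a') j := by
  simp only [innerPoly, Matrix.sum_apply, mul_vecMulVec, vecMulVec_mul, vecMulVec_apply,
    spectralEval_apply, transpose_apply, ← eval_smul_one_apply]
  refine Finset.sum_congr rfl fun j _ => ?_
  congr 1
  simp [mulVec, dotProduct, star_sum, mul_comm]

lemma innerPoly_eq_zero_of_left {P : (Matrix (Fin k) (Fin k) ℂ)[X]}
    (hP : ∀ a, spectralEval lam v ((matPolyEquiv.symm P)ᵀ a) = 0)
    (Q : (Matrix (Fin k) (Fin k) ℂ)[X]) : innerPoly lam v P Q = 0 := by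
  ext a a'
  simp [innerPoly_apply, hP]

lemma innerPoly_add_left (P₁ P₂ Q : (Matrix (Fin k) (Fin k) ℂ)[X]) :
    innerPoly lam v (P₁ + P₂) Q = innerPoly lam v P₁ Q + innerPoly lam v P₂ Q := by
  simp only [innerPoly, ← Finset.sum_add_distrib, eval_add, conjTranspose_add, add_mul]

end InnerPoly

theorem exists_monic_natDegree_eq_and_spectralEval_col_eq_zero {k N d : ℕ} [NeZero k]
    {lam : Fin N → ℝ} {v : Fin N → Fin k → ℂ}
    (hsurj : Function.Surjective
      (spectralEval lam v ∘ₗ LinearMap.piMap fun _ : Fin k => (degreeLT ℂ d).subtype)) :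
    ∃ P : (Matrix (Fin k) (Fin k) ℂ)[X], P.Monic ∧ P.natDegree = d ∧
      ∀ a, spectralEval lam v ((matPolyEquiv.symm P)ᵀ a) = 0 := by
  choose q hq using fun a : Fin k => hsurj (spectralEval lam v (Pi.single a (X ^ d : ℂ[X])))
  set Q : Matrix (Fin k) (Fin k) ℂ[X] := of fun b a => (q a b : ℂ[X])
  have hQ : (matPolyEquiv Q).degree < d := by
    refine (degree_lt_iff_coeff_zero _ _).2 fun t ht => ?_
    ext b a
    rw [matPolyEquiv_coeff_apply]
    exact coeff_eq_zero_of_degree_lt ((mem_degreeLT.1 (q a b).2).trans_le (by exact_mod_cast ht))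
  have hdeg : (X ^ d - matPolyEquiv Q).degree = (d : WithBot ℕ) := by
    rw [degree_sub_eq_left_of_degree_lt] <;> rw [degree_X_pow]
    exact hQ
  refine ⟨X ^ d - matPolyEquiv Q, (monic_X_pow d).sub_of_left (by rwa [degree_X_pow]),
    natDegree_eq_of_degree_eq_some hdeg, fun a => ?_⟩
  have hcol : (matPolyEquiv.symm (X ^ d - matPolyEquiv Q))ᵀ a =
      Pi.single a (X ^ d : ℂ[X]) -
        (LinearMap.piMap fun _ : Fin k => (degreeLT ℂ d).subtype) (q a) := by
    funext b
    simp [Q, diagonal_pow, diagonal_apply, Pi.single_apply, eq_comm]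
  rw [hcol, map_sub, ← LinearMap.comp_apply, hq a, sub_self]

lemma mem_NcalSet_iff {k N d : ℕ} {lam : Fin N → ℝ} {v : Fin N → Fin k → ℂ}
    {p : Fin k → ℂ[X]} :
    p ∈ NcalSet k N d lam v ↔ (∀ a, p a ∈ degreeLT ℂ (d + 1)) ∧ spectralEval lam v p = 0 := by
  simp only [NcalSet, Set.mem_ofPred_eq, degreeLT_succ_eq_degreeLE, mem_degreeLE, funext_iff,
    ← spectralEval_apply, Pi.zero_apply,
    Finset.sum_eq_zero_iff_of_nonneg (fun _ _ => Complex.normSq_nonneg _),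
    Finset.mem_univ, true_implies, Complex.normSq_eq_zero]

theorem exists_submodule_coe_eq_NcalSet_and_finrank_eq {k N d : ℕ}
    {lam : Fin N → ℝ} {v : Fin N → Fin k → ℂ}
    (hsurj : Function.Surjective
      (spectralEval lam v ∘ₗ LinearMap.piMap fun _ : Fin k => (degreeLT ℂ (d + 1)).subtype)) :
    ∃ S : Submodule ℂ (Fin k → ℂ[X]),
      (S : Set (Fin k → ℂ[X])) = NcalSet k N d lam v ∧ Module.finrank ℂ S = k * (d + 1) - N := by
  set ι := LinearMap.piMap fun _ : Fin k => (degreeLT ℂ (d + 1)).subtype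
  have hι : Function.Injective ι := fun p q h => funext fun a => Subtype.ext (congrFun h a)
  refine ⟨(LinearMap.ker (spectralEval lam v ∘ₗ ι)).map ι, ?_, ?_⟩
  · ext p
    simp only [SetLike.mem_coe, Submodule.mem_map, LinearMap.mem_ker, mem_NcalSet_iff]
    constructor
    · rintro ⟨q, hq, rfl⟩
      exact ⟨fun a => (q a).2, hq⟩
    · rintro ⟨hp, hTp⟩
      exact ⟨fun a => ⟨p a, hp a⟩, hTp, rfl⟩
  · have hW : Module.finrank ℂ (Fin k → degreeLT ℂ (d + 1)) = k * (d + 1) := by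
      simp [Module.finrank_pi_fintype, (degreeLTEquiv ℂ (d + 1)).finrank_eq]
    have hrank := LinearMap.finrank_range_add_finrank_ker (spectralEval lam v ∘ₗ ι)
    rw [LinearMap.range_eq_top.2 hsurj, finrank_top, Module.finrank_fin_fun, hW] at hrank
    rw [(Submodule.equivMapOfInjective ι hι _).symm.finrank_eq]
    omega

theorem innerPoly_self_eq_zero_of_forall_natDegree_lt {k N d : ℕ} [NeZero k]
    {lam : Fin N → ℝ} {v : Fin N → Fin k → ℂ} {P₀ P : (Matrix (Fin k) (Fin k) ℂ)[X]}
    (hP₀ : P₀.Monic) (hP₀d : P₀.natDegree = d)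
    (hP₀T : ∀ a, spectralEval lam v ((matPolyEquiv.symm P₀)ᵀ a) = 0)
    (hP : P.Monic) (hPd : P.natDegree = d)
    (hPorth : ∀ Q : (Matrix (Fin k) (Fin k) ℂ)[X], Q.natDegree < d → innerPoly lam v Q P = 0) :
    innerPoly lam v P P = 0 := by
  rcases eq_or_ne P P₀ with rfl | hne
  · exact innerPoly_eq_zero_of_left hP₀T P
  have hlt : (P - P₀).natDegree < d := by
    have hdeg : P.degree = d := by rw [degree_eq_natDegree hP.ne_zero, hPd]
    have hdeg₀ : P₀.degree = d := by rw [degree_eq_natDegree hP₀.ne_zero, hP₀d]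
    rw [natDegree_lt_iff_degree_lt (sub_ne_zero.2 hne), ← hdeg]
    exact degree_sub_lt_left (hdeg.trans hdeg₀.symm) hP.ne_zero
      (by rw [hP.leadingCoeff, hP₀.leadingCoeff])
  rw [← sub_add_cancel P P₀, innerPoly_add_left, sub_add_cancel, hPorth _ hlt,
    innerPoly_eq_zero_of_left hP₀T, add_zero]

theorem degenerate_high_degree_polynomials_general
    (k n ℓ : ℕ) (hℓ : ℓ < k)
    (J : Matrix (Fin (n * k - ℓ)) (Fin (n * k - ℓ)) ℂ) (hJ : IsJkN k n ℓ J)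
    (lam : Fin (n * k - ℓ) → ℝ) (vhat : Fin (n * k - ℓ) → (Fin (n * k - ℓ) → ℂ))
    (heig : ∀ j, J.mulVec (vhat j) = (lam j : ℂ) • vhat j)
    (horth : ∀ i j, ∑ a, star (vhat i a) * vhat j a = if i = j then 1 else 0)
    (v : Fin (n * k - ℓ) → Fin k → ℂ)
    (hv : ∀ j, v j = (Esel k (n * k - ℓ) 0)ᴴ.mulVec (vhat j)) :
    ∀ d : ℕ, n ≤ d →
      (∃ Pm : Polynomial (Matrix (Fin k) (Fin k) ℂ),
          Pm.Monic ∧ Pm.natDegree = d ∧ innerPoly lam v Pm Pm = 0) ∧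
      (∃ S : Submodule ℂ (Fin k → Polynomial ℂ),
          (S : Set (Fin k → Polynomial ℂ)) = NcalSet k (n * k - ℓ) d lam v ∧
          Module.finrank ℂ S = k * (d + 1) - (n * k - ℓ)) ∧
      (∀ Pm : Polynomial (Matrix (Fin k) (Fin k) ℂ),
          Pm.Monic → Pm.natDegree = d →
          (∀ Q : Polynomial (Matrix (Fin k) (Fin k) ℂ), Q.natDegree < d →
            innerPoly lam v Q Pm = 0) →
          innerPoly lam v Pm Pm = 0) := by
  intro d hd
  have : NeZero k := ⟨by omega⟩
  have hsurj {m : ℕ} (hm : n ≤ m) :=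
    hJ.spectralEval_comp_piMap_degreeLT_surjective hℓ heig horth hv hm
  obtain ⟨P₀, hP₀, hP₀d, hP₀T⟩ := exists_monic_natDegree_eq_and_spectralEval_col_eq_zero (hsurj hd)
  exact ⟨⟨P₀, hP₀, hP₀d, innerPoly_eq_zero_of_left hP₀T P₀⟩,
    exists_submodule_coe_eq_NcalSet_and_finrank_eq (hsurj (by omega)),
    fun _ hP hPd hPorth =>
      innerPoly_self_eq_zero_of_forall_natDegree_lt hP₀ hP₀d hP₀T hP hPd hPorth⟩

/-- For the spectral measure of `J ∈ 𝒥_{k,N}` and every `d ≥ n`: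
(i) there is a monic matrix polynomial of degree `d` with vanishing Gram matrix;
(ii) `dim 𝒩_d = k(d+1) - N`; (iii) every monic degree-`d` polynomial orthogonal to all
lower degrees has vanishing Gram matrix. -/
theorem degenerate_high_degree_polynomials
    (k n ℓ : ℕ) (hk : 1 ≤ k) (hn : 2 ≤ n) (hℓ : ℓ < k)
    (J : Matrix (Fin (n * k - ℓ)) (Fin (n * k - ℓ)) ℂ) (hJ : IsJkN k n ℓ J)
    (lam : Fin (n * k - ℓ) → ℝ) (vhat : Fin (n * k - ℓ) → (Fin (n * k - ℓ) → ℂ))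
    (heig : ∀ j, J.mulVec (vhat j) = (lam j : ℂ) • vhat j)
    (horth : ∀ i j, ∑ a, star (vhat i a) * vhat j a = if i = j then 1 else 0)
    (v : Fin (n * k - ℓ) → Fin k → ℂ)
    (hv : ∀ j, v j = (Esel k (n * k - ℓ) 0)ᴴ.mulVec (vhat j)) :
    ∀ d : ℕ, n ≤ d →
      (∃ Pm : Polynomial (Matrix (Fin k) (Fin k) ℂ),
          Pm.Monic ∧ Pm.natDegree = d ∧ innerPoly lam v Pm Pm = 0) ∧
      (∃ S : Submodule ℂ (Fin k → Polynomial ℂ),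
          (S : Set (Fin k → Polynomial ℂ)) = NcalSet k (n * k - ℓ) d lam v ∧
          Module.finrank ℂ S = k * (d + 1) - (n * k - ℓ)) ∧
      (∀ Pm : Polynomial (Matrix (Fin k) (Fin k) ℂ),
          Pm.Monic → Pm.natDegree = d →
          (∀ Q : Polynomial (Matrix (Fin k) (Fin k) ℂ), Q.natDegree < d →
            innerPoly lam v Q Pm = 0) →
          innerPoly lam v Pm Pm = 0) :=
  degenerate_high_degree_polynomials_general k n ℓ hℓ J hJ lam vhat heig horth v hv
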